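/- arXiv:2312.10385 — 4 statements merged into one kernel-verified Lean document; each statement's English description precedes it below -/
import Mathlib

section
/- Let Ω be a finite nonempty type, P0 a trajectory distribution, R, C : Ω → ℝ, and cmax ∈ ℝ with E_{P0}[C] ≤ cmax (feasibility of the pre-trained policy). Set R^E := E_{P0}[R] and define the bad set B := {τ ∈ Ω : R(τ) ≤ R^E and C(τ) > cmax}, and assume P0(B) < 1. Let P* be the conditioned distribution of P0 on the complement of B. Then: (a) E_{P*}[R] − E_{P0}[R] = (Σ_{τ∈B} P0(τ)·(R^E − R(τ))) / (1 − P0(B)); (b) E_{P*}[R] ≥ E_{P0}[R]; and (c) E_{P*}[C] ≤ cmax. -/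
/-- Proposition 1 of the paper: if the pre-trained distribution `P0` is feasible
(`E_{P0}[C] ≤ cmax`) and the bad set consists of the trajectories with reward at most
`R^E = E_{P0}[R]` and cost exceeding `cmax`, then conditioning `P0` on the complement
of `B` yields a distribution `P*` that satisfies the stated reward-gap identity, gives
no worse expected reward, and is feasible. -/
theorem stmt_3 {Ω : Type*} [Fintype Ω] [Nonempty Ω] [DecidableEq Ω]
    (P0 : Ω → ℝ) (hP0nn : ∀ τ, 0 ≤ P0 τ) (hP0sum : ∑ τ, P0 τ = 1)
    (R C : Ω → ℝ) (cmax : ℝ)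
    (hfeas : ∑ τ, P0 τ * C τ ≤ cmax)
    (RE : ℝ) (hRE : RE = ∑ τ, P0 τ * R τ)
    (B : Finset Ω) (hB : ∀ τ, τ ∈ B ↔ (R τ ≤ RE ∧ cmax < C τ))
    (hPB : ∑ τ ∈ B, P0 τ < 1)
    (Pstar : Ω → ℝ)
    (hPstar : ∀ τ, Pstar τ =
      if τ ∈ B then 0 else P0 τ / (1 - ∑ τ' ∈ B, P0 τ')) :
    ((∑ τ, Pstar τ * R τ) - (∑ τ, P0 τ * R τ)
        = (∑ τ ∈ B, P0 τ * (RE - R τ)) / (1 - ∑ τ' ∈ B, P0 τ')) ∧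
    (∑ τ, P0 τ * R τ ≤ ∑ τ, Pstar τ * R τ) ∧
    (∑ τ, Pstar τ * C τ ≤ cmax) := by
  set q : ℝ := 1 - ∑ τ' ∈ B, P0 τ' with hq
  have hqpos : 0 < q := by rw [hq]; linarith
  have key : ∀ f : Ω → ℝ,
      ∑ τ, Pstar τ * f τ = (∑ τ, P0 τ * f τ - ∑ τ ∈ B, P0 τ * f τ) / q := by
    intro f
    have h1 : ∑ τ, Pstar τ * f τ = ∑ τ ∈ Bᶜ, P0 τ / q * f τ := by
      rw [← Finset.sum_add_sum_compl B]
      have hz : ∑ τ ∈ B, Pstar τ * f τ = 0 := by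
        apply Finset.sum_eq_zero
        intro x hx; rw [hPstar]; simp [hx]
      rw [hz, zero_add]
      apply Finset.sum_congr rfl
      intro x hx
      rw [hPstar]
      simp [Finset.mem_compl.mp hx, hq]
    have h2 : ∑ τ ∈ Bᶜ, P0 τ * f τ = ∑ τ, P0 τ * f τ - ∑ τ ∈ B, P0 τ * f τ := by
      rw [← Finset.sum_add_sum_compl B (fun τ => P0 τ * f τ)]; ring
    rw [h1, ← h2, Finset.sum_div]
    exact Finset.sum_congr rfl (fun x _ => by ring)
  have hBsum : ∑ τ ∈ B, P0 τ * (RE - R τ) = RE * (1 - q) - ∑ τ ∈ B, P0 τ * R τ := by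
    have h3 : ∑ τ ∈ B, P0 τ * (RE - R τ)
        = RE * ∑ τ ∈ B, P0 τ - ∑ τ ∈ B, P0 τ * R τ := by
      rw [Finset.mul_sum, ← Finset.sum_sub_distrib]
      exact Finset.sum_congr rfl (fun x _ => by ring)
    rw [h3, hq]; ring
  have hgap : (∑ τ, Pstar τ * R τ) - (∑ τ, P0 τ * R τ)
      = (∑ τ ∈ B, P0 τ * (RE - R τ)) / q := by
    rw [key R, hBsum, ← hRE]
    field_simp
    ring
  refine ⟨hgap, ?_, ?_⟩
  · have hnum : 0 ≤ ∑ τ ∈ B, P0 τ * (RE - R τ) := by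
      apply Finset.sum_nonneg
      intro x hx
      have := (hB x).mp hx
      have := hP0nn x
      nlinarith [this]
    have := div_nonneg hnum hqpos.le
    linarith [hgap ▸ this]
  · rw [key C]
    rw [div_le_iff₀ hqpos]
    have hBC : cmax * (∑ τ ∈ B, P0 τ) ≤ ∑ τ ∈ B, P0 τ * C τ := by
      rw [Finset.mul_sum]
      apply Finset.sum_le_sum
      intro x hx
      have h := (hB x).mp hx
      have hp := hP0nn x
      nlinarith
    have h4 : (1 : ℝ) - q = ∑ τ ∈ B, P0 τ := by rw [hq]; ring
    rw [← h4] at hBC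
    have h5 : cmax * (1 - q) = cmax - cmax * q := by ring
    linarith
end

section
/- There exist a finite nonempty type Ω, a trajectory distribution P0, functions R, C : Ω → ℝ, and a real cmax with E_{P0}[C] ≤ cmax, such that, setting R^E := E_{P0}[R] and B := {τ ∈ Ω : R(τ) ≤ R^E and C(τ) > cmax}, there is a trajectory distribution P with P(τ) = 0 for all τ ∈ B satisfying E_P[C] ≤ cmax and E_P[R] < E_{P0}[R]. (Concretely one may take Ω with three elements, rewards (2, 3, 8), costs (5, 1, 1), P0 = (1/5, 1/5, 3/5), cmax = 2, so R^E = 5.6, B is the first element, and P = (0, 4/5, 1/5) gives E_P[R] = 4 < 5.6 and E_P[C] = 1 ≤ 2.) -/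
/-- A trajectory distribution: a probability mass function on a finite type. -/
def IsTrajDist {Ω : Type} [Fintype Ω] (P : Ω → ℝ) : Prop :=
  (∀ τ, 0 ≤ P τ) ∧ ∑ τ, P τ = 1

/-- Expectation of `f` under `P`. -/
def expVal {Ω : Type} [Fintype Ω] (P f : Ω → ℝ) : ℝ := ∑ τ, P τ * f τ

/-- Proposition 2 of the paper: there is an instance (a finite nonempty trajectory
space, feasible distribution `P0`, rewards `R`, costs `C`, and cost bound `cmax`) where
a distribution `P` assigning zero probability to every bad trajectory
(`R(τ) ≤ E_{P0}[R]` and `C(τ) > cmax`) is feasible yet has strictly smaller expected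
reward than `P0`. -/
theorem stmt_5 :
    ∃ (Ω : Type) (i : Fintype Ω) (_ : Nonempty Ω) (P0 R C : Ω → ℝ) (cmax : ℝ),
      @IsTrajDist Ω i P0 ∧
      @expVal Ω i P0 C ≤ cmax ∧
      ∃ P : Ω → ℝ, @IsTrajDist Ω i P ∧
        (∀ τ, (R τ ≤ @expVal Ω i P0 R ∧ cmax < C τ) → P τ = 0) ∧
        @expVal Ω i P C ≤ cmax ∧
        @expVal Ω i P R < @expVal Ω i P0 R := by
  refine ⟨Fin 3, inferInstance, ⟨0⟩, ![1/5, 1/5, 3/5], ![2, 3, 8], ![5, 1, 1], 2, ?_, ?_,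
    ![0, 4/5, 1/5], ?_, ?_, ?_, ?_⟩
  · constructor
    · intro τ; fin_cases τ <;> norm_num
    · simp [Fin.sum_univ_three]; norm_num
  · simp [expVal, Fin.sum_univ_three]; norm_num
  · constructor
    · intro τ; fin_cases τ <;> norm_num
    · simp [Fin.sum_univ_three]; norm_num
  · intro τ; fin_cases τ <;> simp [expVal, Fin.sum_univ_three] <;> norm_num
  · simp [expVal, Fin.sum_univ_three]; norm_num
  · simp [expVal, Fin.sum_univ_three]; norm_num
end

section
/- Let Ω be a finite nonempty type, P0 a trajectory distribution, and R, C : Ω → ℝ. Set R^E := E_{P0}[R] and C^E := E_{P0}[C], define the bad set B := {τ ∈ Ω : R(τ) ≤ R^E and C(τ) > C^E}, assume P0(B) < 1, and let P* be the conditioned distribution of P0 on the complement of B. Then E_{P*}[R] ≥ R^E and E_{P*}[C] ≤ C^E; i.e., P* offers a higher-or-equal expected reward and a lower-or-equal expected cost than P0. -/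
/-- Proposition 3(i) of the paper: with the bad set
`B = {τ : R(τ) ≤ E_{P0}[R] ∧ C(τ) > E_{P0}[C]}`, conditioning `P0` on the complement of
`B` gives a distribution `P*` with a higher-or-equal expected reward and a
lower-or-equal expected cost than `P0`. -/
theorem stmt_6 {Ω : Type*} [Fintype Ω] [Nonempty Ω] [DecidableEq Ω]
    (P0 : Ω → ℝ) (hP0nn : ∀ τ, 0 ≤ P0 τ) (hP0sum : ∑ τ, P0 τ = 1)
    (R C : Ω → ℝ)
    (RE CE : ℝ) (hRE : RE = ∑ τ, P0 τ * R τ) (hCE : CE = ∑ τ, P0 τ * C τ)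
    (B : Finset Ω) (hB : ∀ τ, τ ∈ B ↔ (R τ ≤ RE ∧ CE < C τ))
    (hPB : ∑ τ ∈ B, P0 τ < 1)
    (Pstar : Ω → ℝ)
    (hPstar : ∀ τ, Pstar τ =
      if τ ∈ B then 0 else P0 τ / (1 - ∑ τ' ∈ B, P0 τ')) :
    RE ≤ ∑ τ, Pstar τ * R τ ∧ ∑ τ, Pstar τ * C τ ≤ CE := by
  set s := ∑ τ ∈ B, P0 τ with hs
  have hq : 0 < 1 - s := by linarith
  have hsplit : ∀ f : Ω → ℝ, ∑ τ, Pstar τ * f τ = (∑ τ ∈ Bᶜ, P0 τ * f τ) / (1 - s) := by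
    intro f
    rw [← Finset.sum_compl_add_sum B (fun τ => Pstar τ * f τ), Finset.sum_div]
    have h1 : ∑ τ ∈ B, Pstar τ * f τ = 0 := by
      apply Finset.sum_eq_zero
      intro τ hτ
      rw [hPstar τ, if_pos hτ, zero_mul]
    rw [h1, add_zero]
    apply Finset.sum_congr rfl
    intro τ hτ
    rw [hPstar τ, if_neg (Finset.mem_compl.mp hτ), div_mul_eq_mul_div]
  have hRsplit : RE = (∑ τ ∈ Bᶜ, P0 τ * R τ) + ∑ τ ∈ B, P0 τ * R τ := by
    rw [hRE, ← Finset.sum_compl_add_sum B (fun τ => P0 τ * R τ)]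
  have hCsplit : CE = (∑ τ ∈ Bᶜ, P0 τ * C τ) + ∑ τ ∈ B, P0 τ * C τ := by
    rw [hCE, ← Finset.sum_compl_add_sum B (fun τ => P0 τ * C τ)]
  have hRB : ∑ τ ∈ B, P0 τ * R τ ≤ s * RE := by
    rw [hs, Finset.sum_mul]
    apply Finset.sum_le_sum
    intro τ hτ
    exact mul_le_mul_of_nonneg_left ((hB τ).mp hτ).1 (hP0nn τ)
  have hCB : s * CE ≤ ∑ τ ∈ B, P0 τ * C τ := by
    rw [hs, Finset.sum_mul]
    apply Finset.sum_le_sum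
    intro τ hτ
    exact mul_le_mul_of_nonneg_left (le_of_lt ((hB τ).mp hτ).2) (hP0nn τ)
  constructor
  · rw [hsplit R, le_div_iff₀ hq]
    nlinarith
  · rw [hsplit C, div_le_iff₀ hq]
    nlinarith
end

section
/- Let Ω be a finite nonempty type, P0 a trajectory distribution, C : Ω → ℝ, cmax ∈ ℝ, and let B ⊆ Ω be a subset with P0(B) < 1 such that C(τ) > cmax for every τ ∈ B. Let P* be the conditioned distribution of P0 on the complement of B. Then E_{P*}[C] − E_{P0}[C] ≤ (E_{P0}[C] − cmax)·P0(B)/(1 − P0(B)). In particular, if E_{P0}[C] ≤ cmax then E_{P*}[C] ≤ E_{P0}[C] ≤ cmax. -/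
/-- The cost bound from the proof of Proposition 1: if every trajectory in `B` violates
the cost constraint (`C(τ) > cmax`) and `P0(B) < 1`, then the conditioned distribution
`P*` satisfies `E_{P*}[C] - E_{P0}[C] ≤ (E_{P0}[C] - cmax) P0(B) / (1 - P0(B))`;
in particular, if `E_{P0}[C] ≤ cmax` then `E_{P*}[C] ≤ E_{P0}[C] ≤ cmax`. -/
theorem stmt_10 {Ω : Type*} [Fintype Ω] [Nonempty Ω] [DecidableEq Ω]
    (P0 : Ω → ℝ) (hP0nn : ∀ τ, 0 ≤ P0 τ) (hP0sum : ∑ τ, P0 τ = 1)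
    (C : Ω → ℝ) (cmax : ℝ)
    (B : Finset Ω) (hBviol : ∀ τ ∈ B, cmax < C τ)
    (hPB : ∑ τ ∈ B, P0 τ < 1)
    (Pstar : Ω → ℝ)
    (hPstar : ∀ τ, Pstar τ =
      if τ ∈ B then 0 else P0 τ / (1 - ∑ τ' ∈ B, P0 τ')) :
    ((∑ τ, Pstar τ * C τ) - (∑ τ, P0 τ * C τ)
        ≤ ((∑ τ, P0 τ * C τ) - cmax) * (∑ τ ∈ B, P0 τ) / (1 - ∑ τ' ∈ B, P0 τ')) ∧
    ((∑ τ, P0 τ * C τ) ≤ cmax →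
      (∑ τ, Pstar τ * C τ) ≤ (∑ τ, P0 τ * C τ) ∧ (∑ τ, P0 τ * C τ) ≤ cmax) := by
  set p : ℝ := ∑ τ ∈ B, P0 τ with hp
  set E : ℝ := ∑ τ, P0 τ * C τ with hE
  have hpnn : 0 ≤ p := Finset.sum_nonneg fun τ _ => hP0nn τ
  have h1p : 0 < 1 - p := by linarith
  -- split the full sum over B and its complement
  have hsplit : ∀ f : Ω → ℝ, ∑ τ, f τ = ∑ τ ∈ B, f τ + ∑ τ ∈ Bᶜ, f τ := by
    intro f
    rw [← Finset.sum_add_sum_compl B f]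
  have hEstar : ∑ τ, Pstar τ * C τ = (E - ∑ τ ∈ B, P0 τ * C τ) / (1 - p) := by
    rw [hsplit (fun τ => Pstar τ * C τ)]
    have h1 : ∑ τ ∈ B, Pstar τ * C τ = 0 := by
      apply Finset.sum_eq_zero
      intro τ hτ
      rw [hPstar τ, if_pos hτ, zero_mul]
    have h2 : ∑ τ ∈ Bᶜ, Pstar τ * C τ = (∑ τ ∈ Bᶜ, P0 τ * C τ) / (1 - p) := by
      rw [Finset.sum_div]
      apply Finset.sum_congr rfl
      intro τ hτ
      rw [hPstar τ, if_neg (Finset.mem_compl.mp hτ), div_mul_eq_mul_div]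
    have h3 : ∑ τ ∈ Bᶜ, P0 τ * C τ = E - ∑ τ ∈ B, P0 τ * C τ := by
      rw [hE, hsplit (fun τ => P0 τ * C τ)]; ring
    rw [h1, h2, h3, zero_add]
  have hBC : cmax * p ≤ ∑ τ ∈ B, P0 τ * C τ := by
    rw [hp, Finset.mul_sum]
    apply Finset.sum_le_sum
    intro τ hτ
    rw [mul_comm]
    exact mul_le_mul_of_nonneg_left (le_of_lt (hBviol τ hτ)) (hP0nn τ)
  have hmain : (∑ τ, Pstar τ * C τ) - E ≤ (E - cmax) * p / (1 - p) := by
    rw [hEstar]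
    rw [div_sub' (ne_of_gt h1p), div_le_div_iff₀ h1p h1p]
    nlinarith
  refine ⟨hmain, fun hEc => ⟨?_, hEc⟩⟩
  have : (E - cmax) * p / (1 - p) ≤ 0 := by
    apply div_nonpos_of_nonpos_of_nonneg _ (le_of_lt h1p)
    exact mul_nonpos_of_nonpos_of_nonneg (by linarith) hpnn
  linarith
end
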